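/- For probability measures p on compact X ⊂ ℝ^{d_X} and q on compact Y ⊂ ℝ^{d_Y}, the inner-product Gromov-Wasserstein cost admits the decomposition GW(p,q) = ∬⟨x,x'⟩² dp dp + ∬⟨y,y'⟩² dq dq - 2 sup_{π∈Π(p,q)} ‖∫ x yᵀ dπ(x,y)‖_F², where ‖·‖_F is the Frobenius norm; in particular the quadratic GW objective with cost (⟨x,x'⟩ - ⟨y,y'⟩)² reduces to maximizing the squared Frobenius norm of the cross-correlation matrix over couplings. -/

import Mathlib

/-!
Expanding the square, `(⟨x,x'⟩ - ⟨y,y'⟩)² = ⟨x,x'⟩² - 2⟨x,x'⟩⟨y,y'⟩ + ⟨y,y'⟩²`, and each of the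
three terms integrates against `π ⊗ π` to a sum of squared second moments:
`∬ ⟨x,x'⟩⟨y,y'⟩ dπ dπ = ∑ᵢⱼ (∫ xᵢ yⱼ dπ)²`, and likewise for the other two. The moments of
`x` alone and of `y` alone only see the marginals `p` and `q`, so the objective is an affine,
decreasing function of `‖∫ x yᵀ dπ‖_F²`, and its infimum over couplings is the same function of
the supremum. Compact supports make every moment finite and the supremum bounded.
-/

open MeasureTheory

section DoubleIntegral

variable {α ι κ : Type*} [MeasurableSpace α] [Fintype ι] [Fintype κ] {μ : Measure α}

theorem integral_sum_sum_mul_const {f : ι → ι → α → ℝ} (hf : ∀ k l, Integrable (f k l) μ)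
    (c : ι → ι → ℝ) :
    ∫ z, ∑ k, ∑ l, f k l z * c k l ∂μ = ∑ k, ∑ l, (∫ z, f k l z ∂μ) * c k l := by
  rw [integral_finsetSum _ fun k _ => integrable_finsetSum _ fun l _ => (hf k l).mul_const _]
  refine Finset.sum_congr rfl fun k _ => ?_
  rw [integral_finsetSum _ fun l _ => (hf k l).mul_const _]
  exact Finset.sum_congr rfl fun l _ => integral_mul_const _ _

theorem integral_integral_sq_sum_mul {φ : ι → α → ℝ}
    (hφ : ∀ k l, Integrable (fun z => φ k z * φ l z) μ) (ε : ι → ℝ) :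
    ∫ z, ∫ z', (∑ k, ε k * (φ k z * φ k z')) ^ 2 ∂μ ∂μ =
      ∑ k, ∑ l, ε k * ε l * (∫ z, φ k z * φ l z ∂μ) ^ 2 := by
  have expand : ∀ z z', (∑ k, ε k * (φ k z * φ k z')) ^ 2 =
      ∑ k, ∑ l, φ k z' * φ l z' * (ε k * ε l * (φ k z * φ l z)) := fun z z' => by
    rw [sq, Finset.sum_mul_sum]
    exact Finset.sum_congr rfl fun k _ => Finset.sum_congr rfl fun l _ => by ring
  have inner : ∀ z, ∫ z', (∑ k, ε k * (φ k z * φ k z')) ^ 2 ∂μ =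
      ∑ k, ∑ l, φ k z * φ l z * (ε k * ε l * ∫ z, φ k z * φ l z ∂μ) := fun z => by
    simp_rw [expand z, integral_sum_sum_mul_const hφ]
    exact Finset.sum_congr rfl fun k _ => Finset.sum_congr rfl fun l _ => by ring
  simp_rw [inner, integral_sum_sum_mul_const hφ]
  exact Finset.sum_congr rfl fun k _ => Finset.sum_congr rfl fun l _ => by ring

theorem integral_integral_sq_sum_mul_self {φ : ι → α → ℝ}
    (hφ : ∀ k l, Integrable (fun z => φ k z * φ l z) μ) :
    ∫ z, ∫ z', (∑ k, φ k z * φ k z') ^ 2 ∂μ ∂μ = ∑ k, ∑ l, (∫ z, φ k z * φ l z ∂μ) ^ 2 := by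
  simpa using integral_integral_sq_sum_mul hφ 1

theorem integral_integral_sq_sum_mul_sub {φ : ι → α → ℝ} {ψ : κ → α → ℝ}
    (hφ : ∀ i i', Integrable (fun z => φ i z * φ i' z) μ)
    (hψ : ∀ j j', Integrable (fun z => ψ j z * ψ j' z) μ)
    (hφψ : ∀ i j, Integrable (fun z => φ i z * ψ j z) μ) :
    ∫ z, ∫ z', ((∑ i, φ i z * φ i z') - ∑ j, ψ j z * ψ j z') ^ 2 ∂μ ∂μ =
      ∑ i, ∑ i', (∫ z, φ i z * φ i' z ∂μ) ^ 2 + ∑ j, ∑ j', (∫ z, ψ j z * ψ j' z ∂μ) ^ 2 -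
        2 * ∑ i, ∑ j, (∫ z, φ i z * ψ j z ∂μ) ^ 2 := by
  set χ : ι ⊕ κ → α → ℝ := fun k z => Sum.elim (φ · z) (ψ · z) k
  have hχ : ∀ k l, Integrable (fun z => χ k z * χ l z) μ := by
    rintro (i | j) (i' | j')
    exacts [hφ i i', hφψ i j',
      by simpa only [χ, Sum.elim_inl, Sum.elim_inr, mul_comm] using hφψ i' j, hψ j j']
  have h := integral_integral_sq_sum_mul hχ (Sum.elim 1 (-1))
  simp only [Fintype.sum_sum_type, χ, Sum.elim_inl, Sum.elim_inr, Pi.one_apply, Pi.neg_apply]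
    at h
  have hswap : ∑ j, ∑ i, (∫ z, ψ j z * φ i z ∂μ) ^ 2 = ∑ i, ∑ j, (∫ z, φ i z * ψ j z ∂μ) ^ 2 := by
    rw [Finset.sum_comm]
    simp_rw [mul_comm (ψ _ _)]
  simp only [one_mul, mul_one, neg_mul, neg_neg, Finset.sum_neg_distrib,
    ← sub_eq_add_neg, Finset.sum_add_distrib, Finset.sum_sub_distrib, hswap] at h
  rw [h]
  ring

end DoubleIntegral

section CompactSupport

variable {X E : Type*} [TopologicalSpace X] [MeasurableSpace X] [NormedAddCommGroup E]
  {K : Set X}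

theorem Continuous.integrable_of_ae_mem_isCompact [OpensMeasurableSpace X] [T2Space X]
    {μ : Measure X} [IsFiniteMeasureOnCompacts μ] (hK : IsCompact K) (hμK : ∀ᵐ x ∂μ, x ∈ K)
    {f : X → E} (hf : Continuous f) : Integrable f μ := by
  rw [← Measure.restrict_eq_self_of_ae_mem hμK]
  exact hf.continuousOn.integrableOn_compact hK

theorem IsCompact.exists_forall_norm_integral_le [NormedSpace ℝ E] (hK : IsCompact K) {f : X → E}
    (hf : Continuous f) :
    ∃ C, ∀ μ : Measure X, IsProbabilityMeasure μ → (∀ᵐ x ∂μ, x ∈ K) → ‖∫ x, f x ∂μ‖ ≤ C := by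
  obtain ⟨C, hC⟩ := hK.exists_bound_of_continuousOn hf.continuousOn
  refine ⟨C, fun μ _ hμK => ?_⟩
  simpa using norm_integral_le_of_norm_le_const (hμK.mono hC)

theorem bddAbove_image_sum_sum_sq_integral {ι κ : Type*} [Fintype ι] [Fintype κ]
    (hK : IsCompact K) {f : ι → κ → X → ℝ} (hf : ∀ i j, Continuous (f i j))
    {S : Set (Measure X)} (hS : ∀ μ ∈ S, IsProbabilityMeasure μ ∧ ∀ᵐ x ∂μ, x ∈ K) :
    BddAbove ((fun μ => ∑ i, ∑ j, (∫ x, f i j x ∂μ) ^ 2) '' S) := by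
  choose C hC using fun i j => hK.exists_forall_norm_integral_le (hf i j)
  refine ⟨∑ i, ∑ j, C i j ^ 2, ?_⟩
  rintro _ ⟨μ, hμ, rfl⟩
  refine Finset.sum_le_sum fun i _ => Finset.sum_le_sum fun j _ => ?_
  have hμij := abs_le.mp (hC i j μ (hS μ hμ).1 (hS μ hμ).2)
  exact sq_le_sq' hμij.1 hμij.2

end CompactSupport

section Coupling

variable {X Y : Type*} [MeasurableSpace X] [MeasurableSpace Y] {p : Measure X} {q : Measure Y}
  {π : Measure (X × Y)}

theorem isProbabilityMeasure_of_map_fst_eq [IsProbabilityMeasure p] (hπp : π.map Prod.fst = p) :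
    IsProbabilityMeasure π :=
  (Measure.isProbabilityMeasure_map_iff measurable_fst.aemeasurable).1 (hπp ▸ ‹_›)

theorem ae_mem_prod_of_map_eq {Kx : Set X} {Ky : Set Y} (hπp : π.map Prod.fst = p)
    (hπq : π.map Prod.snd = q) (hp : ∀ᵐ x ∂p, x ∈ Kx) (hq : ∀ᵐ y ∂q, y ∈ Ky) :
    ∀ᵐ z ∂π, z ∈ Kx ×ˢ Ky := by
  subst hπp hπq
  filter_upwards [ae_of_ae_map measurable_fst.aemeasurable hp,
    ae_of_ae_map measurable_snd.aemeasurable hq] with z hx hy using ⟨hx, hy⟩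

variable {E : Type*} [NormedAddCommGroup E] [NormedSpace ℝ E]

theorem integral_comp_fst_of_map_eq (hπp : π.map Prod.fst = p) {f : X → E}
    (hf : AEStronglyMeasurable f p) : ∫ z, f z.1 ∂π = ∫ x, f x ∂p := by
  subst hπp
  exact (integral_map measurable_fst.aemeasurable hf).symm

theorem integral_comp_snd_of_map_eq (hπq : π.map Prod.snd = q) {f : Y → E}
    (hf : AEStronglyMeasurable f q) : ∫ z, f z.2 ∂π = ∫ y, f y ∂q := by
  subst hπq
  exact (integral_map measurable_snd.aemeasurable hf).symm

end Coupling

section Euclidean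

variable {ι κ : Type*} [Fintype ι] [Fintype κ]
  {p : Measure (EuclideanSpace ℝ ι)} {q : Measure (EuclideanSpace ℝ κ)} [IsProbabilityMeasure p]
  {Kx : Set (EuclideanSpace ℝ ι)} {Ky : Set (EuclideanSpace ℝ κ)}

theorem integral_integral_sq_inner_sub_inner_of_map_eq (hKx : IsCompact Kx) (hKy : IsCompact Ky)
    (hpK : ∀ᵐ x ∂p, x ∈ Kx) (hqK : ∀ᵐ y ∂q, y ∈ Ky)
    {π : Measure (EuclideanSpace ℝ ι × EuclideanSpace ℝ κ)} (hπp : π.map Prod.fst = p)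
    (hπq : π.map Prod.snd = q) :
    ∫ z, ∫ z', ((∑ i, z.1 i * z'.1 i) - ∑ j, z.2 j * z'.2 j) ^ 2 ∂π ∂π =
      (∫ x, ∫ x', (∑ i, x i * x' i) ^ 2 ∂p ∂p) + (∫ y, ∫ y', (∑ j, y j * y' j) ^ 2 ∂q ∂q) -
        2 * ∑ i, ∑ j, (∫ z, z.1 i * z.2 j ∂π) ^ 2 := by
  have := isProbabilityMeasure_of_map_fst_eq hπp
  have : IsProbabilityMeasure q :=
    hπq ▸ Measure.isProbabilityMeasure_map measurable_snd.aemeasurable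
  have hπK := ae_mem_prod_of_map_eq hπp hπq hpK hqK
  have hfst : ∀ i i', ∫ z, z.1 i * z.1 i' ∂π = ∫ x, x i * x i' ∂p := fun i i' =>
    integral_comp_fst_of_map_eq hπp (f := fun x => x i * x i') (by fun_prop)
  have hsnd : ∀ j j', ∫ z, z.2 j * z.2 j' ∂π = ∫ y, y j * y j' ∂q := fun j j' =>
    integral_comp_snd_of_map_eq hπq (f := fun y => y j * y j') (by fun_prop)
  rw [integral_integral_sq_sum_mul_sub (φ := fun i z => z.1 i) (ψ := fun j z => z.2 j)
    (fun i i' => Continuous.integrable_of_ae_mem_isCompact (hKx.prod hKy) hπK (by fun_prop))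
    (fun j j' => Continuous.integrable_of_ae_mem_isCompact (hKx.prod hKy) hπK (by fun_prop))
    (fun i j => Continuous.integrable_of_ae_mem_isCompact (hKx.prod hKy) hπK (by fun_prop)),
    integral_integral_sq_sum_mul_self (φ := fun i x => x i)
      (fun i i' => Continuous.integrable_of_ae_mem_isCompact hKx hpK (by fun_prop)),
    integral_integral_sq_sum_mul_self (φ := fun j y => y j)
      (fun j j' => Continuous.integrable_of_ae_mem_isCompact hKy hqK (by fun_prop))]
  simp only [hfst, hsnd]

end Euclidean

/-- For compactly supported probability measures on Euclidean spaces, the inner-product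
Gromov-Wasserstein cost decomposes into marginal terms minus twice the supremum over couplings
of the squared Frobenius norm of the cross-correlation matrix `∫ x yᵀ dπ`. -/
theorem gw_inner_product_decomposition {dX dY : ℕ}
    (p : Measure (EuclideanSpace ℝ (Fin dX))) (q : Measure (EuclideanSpace ℝ (Fin dY)))
    [IsProbabilityMeasure p] [IsProbabilityMeasure q]
    (hp : ∃ K, IsCompact K ∧ p Kᶜ = 0) (hq : ∃ K, IsCompact K ∧ q Kᶜ = 0)
    (Couplings : Set (Measure (EuclideanSpace ℝ (Fin dX) × EuclideanSpace ℝ (Fin dY))))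
    (hCouplings : Couplings =
      {π | π.map Prod.fst = p ∧ π.map Prod.snd = q}) :
    sInf ((fun π : Measure (EuclideanSpace ℝ (Fin dX) × EuclideanSpace ℝ (Fin dY)) =>
        ∫ z, ∫ z', ((∑ i, z.1 i * z'.1 i) - ∑ j, z.2 j * z'.2 j) ^ 2 ∂π ∂π) '' Couplings) =
      (∫ x, ∫ x', (∑ i, x i * x' i) ^ 2 ∂p ∂p) +
        (∫ y, ∫ y', (∑ j, y j * y' j) ^ 2 ∂q ∂q) -
        2 * sSup ((fun π : Measure (EuclideanSpace ℝ (Fin dX) × EuclideanSpace ℝ (Fin dY)) =>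
          ∑ i, ∑ j, (∫ z, z.1 i * z.2 j ∂π) ^ 2) '' Couplings) := by
  obtain ⟨Kx, hKx, hpKx⟩ := hp
  obtain ⟨Ky, hKy, hqKy⟩ := hq
  have hpK : ∀ᵐ x ∂p, x ∈ Kx := ae_iff.2 hpKx
  have hqK : ∀ᵐ y ∂q, y ∈ Ky := ae_iff.2 hqKy
  have hmarg : ∀ π ∈ Couplings, π.map Prod.fst = p ∧ π.map Prod.snd = q :=
    fun π hπ => by rwa [hCouplings] at hπ
  have hsupp : ∀ π ∈ Couplings, IsProbabilityMeasure π ∧ ∀ᵐ z ∂π, z ∈ Kx ×ˢ Ky := fun π hπ =>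
    ⟨isProbabilityMeasure_of_map_fst_eq (hmarg π hπ).1,
      ae_mem_prod_of_map_eq (hmarg π hπ).1 (hmarg π hπ).2 hpK hqK⟩
  have hbdd := bddAbove_image_sum_sum_sq_integral (hKx.prod hKy)
    (f := fun i j z => z.1 i * z.2 j) (fun i j => by fun_prop) hsupp
  have hne : Couplings.Nonempty := ⟨p.prod q, hCouplings ▸ ⟨by simp, by simp⟩⟩
  rw [Set.image_congr fun π hπ => integral_integral_sq_inner_sub_inner_of_map_eq hKx hKy hpK hqK
      (hmarg π hπ).1 (hmarg π hπ).2,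
    ← Set.image_image (fun t => _ - 2 * t) (fun π => ∑ i, ∑ j, _),
    ← Antitone.map_csSup_of_continuousAt (by fun_prop) (fun s t hst => by dsimp only; linarith)
      (hne.image _) hbdd]
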